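/- Let R be a stably finite (possibly noncommutative) ring, let n ≥ 1, let A = (a₁,…,aₙ) be a row vector over R, let B be an n×n matrix over R, and let C = (c₁,…,cₙ)ᵗ be a column vector over R. Assume the row–matrix product A·B is zero, the matrix–column product B·C is zero, and that a₁ and c₁ are units of R. Let B' be the (n−1)×(n−1) submatrix of B obtained by deleting the first row and the first column of B. Then B' has a two-sided inverse over R if and only if the kernel of the map v ↦ ∑ⱼ aⱼ·vⱼ from Rⁿ to R equals the image of the map v ↦ B·v from Rⁿ to Rⁿ (i.e. the first homology of the complex 0 → R → Rⁿ → Rⁿ → R → 0 with differentials given by C, B, A vanishes). -/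

import Mathlib

/-!
Since `a₀` is a unit, a vector in the kernel of `A` is determined by its tail, and every tail
occurs. Since `c₀` is a unit and `B C = 0`, every vector in the image of `B` is `B (0, y)` for
some `y`, and the tail of `B (0, y)` is `B' y`. Hence `ker A ⊆ im B` exactly when `B'` is
surjective, i.e. has a right inverse, which is two-sided by stable finiteness; the inclusion
`im B ⊆ ker A` is `A B = 0`.
-/

open Matrix

namespace Matrix

variable {R : Type*} [Ring R] {n : ℕ}

theorem eq_of_dotProduct_eq_of_vecTail_eq {a v w : Fin (n + 1) → R} (ha : IsLeftRegular (a 0))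
    (hdot : a ⬝ᵥ v = a ⬝ᵥ w) (htail : vecTail v = vecTail w) : v = w := by
  rw [← cons_head_tail a, cons_dotProduct, cons_dotProduct, htail, add_left_inj] at hdot
  rw [← cons_head_tail v, ← cons_head_tail w, ha hdot, htail]

theorem dotProduct_cons_neg_inv_eq_zero (a : Fin (n + 1) → R) (ha : IsUnit (a 0))
    (z : Fin n → R) : a ⬝ᵥ vecCons (-(↑ha.unit⁻¹ * (vecTail a ⬝ᵥ z))) z = 0 := by
  rw [dotProduct_cons, vecHead, mul_neg, ← mul_assoc, ha.mul_val_inv, one_mul, neg_add_cancel]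

theorem vecTail_mulVec_cons_zero (B : Matrix (Fin (n + 1)) (Fin (n + 1)) R) (y : Fin n → R) :
    vecTail (B *ᵥ vecCons 0 y) = B.submatrix Fin.succ Fin.succ *ᵥ y := by
  ext i
  rw [vecTail, Function.comp_apply, mulVec, dotProduct_cons, vecHead, mul_zero, zero_add]
  rfl

theorem exists_mulVec_cons_zero_eq {B : Matrix (Fin (n + 1)) (Fin (n + 1)) R}
    {c : Fin (n + 1) → R} (hBc : B *ᵥ c = 0) (hc : IsUnit (c 0)) (w : Fin (n + 1) → R) :
    ∃ y : Fin n → R, B *ᵥ vecCons 0 y = B *ᵥ w := by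
  set x := w - MulOpposite.op (↑hc.unit⁻¹ * w 0) • c
  have hx0 : x 0 = 0 := by simp [x, ← mul_assoc, hc.mul_val_inv]
  refine ⟨vecTail x, ?_⟩
  have hx : vecCons 0 (vecTail x) = x := by rw [← hx0]; exact cons_head_tail x
  rw [hx, mulVec_sub, mulVec_smul, hBc, smul_zero, sub_zero]

variable {a : Fin (n + 1) → R} {B : Matrix (Fin (n + 1)) (Fin (n + 1)) R}

theorem range_mulVec_subset_of_vecMul_eq_zero (haB : a ᵥ* B = 0) :
    Set.range B.mulVec ⊆ {v | a ⬝ᵥ v = 0} := by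
  rintro _ ⟨w, rfl⟩
  change a ⬝ᵥ (B *ᵥ w) = 0
  rw [dotProduct_mulVec, haB, zero_dotProduct]

theorem setOf_dotProduct_eq_zero_subset_range_mulVec (haB : a ᵥ* B = 0)
    (ha : IsLeftRegular (a 0))
    (hB' : Function.Surjective (B.submatrix Fin.succ Fin.succ).mulVec) :
    {v | a ⬝ᵥ v = 0} ⊆ Set.range B.mulVec := by
  intro v hv
  obtain ⟨y, hy⟩ := hB' (vecTail v)
  refine ⟨vecCons 0 y, eq_of_dotProduct_eq_of_vecTail_eq ha ?_ ?_⟩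
  · rw [range_mulVec_subset_of_vecMul_eq_zero haB ⟨_, rfl⟩, hv]
  · rw [vecTail_mulVec_cons_zero, hy]

theorem surjective_mulVec_submatrix_succ {c : Fin (n + 1) → R} (hBc : B *ᵥ c = 0)
    (ha : IsUnit (a 0)) (hc : IsUnit (c 0)) (hB : {v | a ⬝ᵥ v = 0} ⊆ Set.range B.mulVec) :
    Function.Surjective (B.submatrix Fin.succ Fin.succ).mulVec := by
  intro z
  obtain ⟨w, hw⟩ := hB (dotProduct_cons_neg_inv_eq_zero a ha z)
  obtain ⟨y, hy⟩ := exists_mulVec_cons_zero_eq hBc hc w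
  refine ⟨y, ?_⟩
  rw [← vecTail_mulVec_cons_zero, hy, hw, tail_cons]

end Matrix

/-- Lemma 2.3 of the paper, equivalence (1) ⟺ (3).  Let `R` be a stably finite ring,
`n ≥ 1`, and let `0 → R → Rⁿ → Rⁿ → R → 0` be a complex whose maps are given by a column
vector `C`, an `n × n` matrix `B` and a row vector `A`, with `a₁` and `c₁` units.  Then the
submatrix `B'` of `B` obtained by deleting the first row and column has a two-sided inverse
over `R` if and only if the first homology of the complex vanishes, i.e. the kernel of
`v ↦ A ⬝ v` equals the image of `v ↦ B ⬝ v`. -/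
theorem submatrix_invertible_iff_H1_vanishes (R : Type*) [Ring R]
    (hsf : ∀ (m : ℕ) (X Y : Matrix (Fin m) (Fin m) R), X * Y = 1 → Y * X = 1)
    (n : ℕ)
    (A : Fin (n + 1) → R) (B : Matrix (Fin (n + 1)) (Fin (n + 1)) R) (C : Fin (n + 1) → R)
    (hAB : ∀ j, ∑ i, A i * B i j = 0)
    (hBC : B.mulVec C = 0)
    (ha : IsUnit (A 0)) (hc : IsUnit (C 0)) :
    (∃ D : Matrix (Fin n) (Fin n) R,
        B.submatrix Fin.succ Fin.succ * D = 1 ∧ D * B.submatrix Fin.succ Fin.succ = 1) ↔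
      {v : Fin (n + 1) → R | ∑ j, A j * v j = 0} =
        Set.range (fun v : Fin (n + 1) → R => B.mulVec v) := by
  have hAB : A ᵥ* B = 0 := funext hAB
  change _ ↔ {v | A ⬝ᵥ v = 0} = Set.range B.mulVec
  calc (∃ D, B.submatrix Fin.succ Fin.succ * D = 1 ∧ D * B.submatrix Fin.succ Fin.succ = 1)
      ↔ ∃ D, B.submatrix Fin.succ Fin.succ * D = 1 :=
        ⟨fun ⟨D, hD, _⟩ => ⟨D, hD⟩, fun ⟨D, hD⟩ => ⟨D, hD, hsf n _ D hD⟩⟩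
    _ ↔ Function.Surjective (B.submatrix Fin.succ Fin.succ).mulVec :=
        mulVec_surjective_iff_exists_right_inverse.symm
    _ ↔ {v | A ⬝ᵥ v = 0} ⊆ Set.range B.mulVec :=
        ⟨setOf_dotProduct_eq_zero_subset_range_mulVec hAB ha.isRegular.left,
          surjective_mulVec_submatrix_succ hBC ha hc⟩
    _ ↔ {v | A ⬝ᵥ v = 0} = Set.range B.mulVec :=
        ⟨fun h => h.antisymm (range_mulVec_subset_of_vecMul_eq_zero hAB), Eq.subset⟩
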